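/- Let G be a numerical semigroup minimally generated by n₁ < n₂ < n₃ that is not symmetric, so that (by Herzog's theorem) there are positive integers with α₁n₁ = α₁₂n₂ + α₁₃n₃, α₂n₂ = α₂₁n₁ + α₂₃n₃, α₃n₃ = α₃₁n₁ + α₃₂n₂, and αᵢ = αⱼᵢ + α_kᵢ for each permutation (i,j,k) of (1,2,3). Then max{ord_G(w) : w ∈ Ap(G, n₁)} = max{α₂ + α₁₃ − 2, α₃ + α₁₂ − 2}, and moreover both (α₂ − 1)n₂ + (α₁₃ − 1)n₃ and (α₁₂ − 1)n₂ + (α₃ − 1)n₃ lie in Ap(G, n₁). -/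

import Mathlib

/-- The numerical semigroup generated by `n1, n2, n3`. -/
def gen3 (n1 n2 n3 : ℕ) : Set ℕ :=
  {z | ∃ a b c : ℕ, a * n1 + b * n2 + c * n3 = z}

/-- The set of lengths `a + b + c` of representations of `z`. -/
def len3 (n1 n2 n3 z : ℕ) : Set ℕ :=
  {s | ∃ a b c : ℕ, a * n1 + b * n2 + c * n3 = z ∧ a + b + c = s}

/-- The Apéry set of `⟨n1, n2, n3⟩` with respect to `n1`. -/
def ap3 (n1 n2 n3 : ℕ) : Set ℕ :=
  {x | x ∈ gen3 n1 n2 n3 ∧ ¬ ∃ y ∈ gen3 n1 n2 n3, y + n1 = x}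

/-!
Call `(b, c)` an Apéry index if `b < α₂`, `c < α₃` and not both `α₁₂ ≤ b` and `α₁₃ ≤ c`. Every
factorization `a n₁ + b n₂ + c n₃` of an Apéry element has `a = 0` and `(b, c)` an Apéry index:
otherwise one of the three Herzog relations exhibits `w - n₁ ∈ G`. Conversely, for an Apéry index
`(b, c)` the element `b n₂ + c n₃` has no factorization involving `n₁` (strong induction on the
coefficient of `n₁`: subtracting the relation for `α₁` lowers it), and by the minimality of `α₂`
its only factorization is `(0, b, c)`. Hence the largest order on `Ap(G, n₁)` is the largest value
of `b + c` over Apéry indices, attained at the corners `(α₂ - 1, α₁₃ - 1)` and `(α₁₂ - 1, α₃ - 1)`.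
-/

def AperyIndex (α2 α3 α12 α13 b c : ℕ) : Prop :=
  b < α2 ∧ c < α3 ∧ ¬(α12 ≤ b ∧ α13 ≤ c)

variable {n1 n2 n3 α1 α2 α3 α12 α13 : ℕ}

theorem eq_and_eq_of_mul_add_mul_eq (h3 : 0 < n3)
    (hα2 : α2 ∈ lowerBounds {α : ℕ | 0 < α ∧ ∃ a c : ℕ, α * n2 = a * n1 + c * n3})
    {b c b' c' : ℕ} (hb : b < α2) (hb' : b' < α2) (h : b * n2 + c * n3 = b' * n2 + c' * n3) :
    b = b' ∧ c = c' := by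
  wlog hle : b ≤ b' generalizing b c b' c'
  · exact (this hb' hb h.symm (by omega)).imp Eq.symm Eq.symm
  obtain ⟨d, rfl⟩ := Nat.exists_eq_add_of_le hle
  have hc : c' * n3 ≤ c * n3 := by nlinarith
  obtain ⟨e, rfl⟩ := Nat.exists_eq_add_of_le (Nat.le_of_mul_le_mul_right hc h3)
  have hde : d * n2 = 0 * n1 + e * n3 := by linarith
  rcases Nat.eq_zero_or_pos d with rfl | hd
  · have : e = 0 := by simpa [h3.ne'] using hde.symm
    simp [this]
  · have := hα2 ⟨hd, 0, e, hde⟩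
    omega

theorem AperyIndex.eq_zero_of_add_mul_eq (h1 : 0 < n1) (h3 : 0 < n3)
    (hα1 : IsLeast {α : ℕ | 0 < α ∧ ∃ b c : ℕ, α * n1 = b * n2 + c * n3} α1)
    (hα2 : α2 ∈ lowerBounds {α : ℕ | 0 < α ∧ ∃ a c : ℕ, α * n2 = a * n1 + c * n3})
    (hα3 : α3 ∈ lowerBounds {α : ℕ | 0 < α ∧ ∃ a b : ℕ, α * n3 = a * n1 + b * n2})
    (hα12 : α12 < α2) (hr1 : α1 * n1 = α12 * n2 + α13 * n3) {a B C b c : ℕ}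
    (hbc : AperyIndex α2 α3 α12 α13 b c) (h : a * n1 + B * n2 + C * n3 = b * n2 + c * n3) :
    a = 0 := by
  induction a using Nat.strong_induction_on generalizing B C b c with
  | _ a ih =>
  obtain ⟨hb, hc, hnot⟩ := hbc
  rcases le_or_gt b B with hB | hB <;> rcases le_or_gt c C with hC | hC
  · have : a * n1 = 0 := by nlinarith
    simpa [h1.ne'] using this
  · obtain ⟨β, rfl⟩ := Nat.exists_eq_add_of_le hB
    obtain ⟨γ, rfl⟩ := Nat.exists_eq_add_of_lt hC
    have := hα3 ⟨γ.succ_pos, a, β, by linarith⟩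
    omega
  · obtain ⟨β, rfl⟩ := Nat.exists_eq_add_of_lt hB
    obtain ⟨γ, rfl⟩ := Nat.exists_eq_add_of_le hC
    have := hα2 ⟨β.succ_pos, a, γ, by linarith⟩
    omega
  · obtain ⟨β, rfl⟩ := Nat.exists_eq_add_of_lt hB
    obtain ⟨γ, rfl⟩ := Nat.exists_eq_add_of_lt hC
    by_contra ha
    obtain ⟨δ, rfl⟩ := Nat.exists_eq_add_of_le
      (hα1.2 ⟨Nat.pos_of_ne_zero ha, β + 1, γ + 1, by linarith⟩)
    have hδ : δ * n1 + α12 * n2 + α13 * n3 = (β + 1) * n2 + (γ + 1) * n3 := by linarith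
    have hidx : AperyIndex α2 α3 α12 α13 (β + 1) (γ + 1) :=
      ⟨by omega, by omega, fun h' => hnot ⟨by omega, by omega⟩⟩
    obtain rfl := ih δ (by linarith [hα1.1.1]) hidx hδ
    obtain ⟨rfl, rfl⟩ := eq_and_eq_of_mul_add_mul_eq h3 hα2 hα12 hidx.1 (by simpa using hδ)
    exact hidx.2.2 ⟨le_rfl, le_rfl⟩

theorem AperyIndex.mem_ap3 (h1 : 0 < n1) (h3 : 0 < n3)
    (hα1 : IsLeast {α : ℕ | 0 < α ∧ ∃ b c : ℕ, α * n1 = b * n2 + c * n3} α1)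
    (hα2 : α2 ∈ lowerBounds {α : ℕ | 0 < α ∧ ∃ a c : ℕ, α * n2 = a * n1 + c * n3})
    (hα3 : α3 ∈ lowerBounds {α : ℕ | 0 < α ∧ ∃ a b : ℕ, α * n3 = a * n1 + b * n2})
    (hα12 : α12 < α2) (hr1 : α1 * n1 = α12 * n2 + α13 * n3) {b c : ℕ}
    (hbc : AperyIndex α2 α3 α12 α13 b c) : b * n2 + c * n3 ∈ ap3 n1 n2 n3 := by
  refine ⟨⟨0, b, c, by ring⟩, ?_⟩
  rintro ⟨_, ⟨A, B, C, rfl⟩, h⟩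
  exact A.succ_ne_zero <|
    hbc.eq_zero_of_add_mul_eq h1 h3 hα1 hα2 hα3 hα12 hr1 (B := B) (C := C) (by linarith)

theorem AperyIndex.len3_eq {α21 α23 : ℕ} (h1 : 0 < n1) (h3 : 0 < n3)
    (hα1 : IsLeast {α : ℕ | 0 < α ∧ ∃ b c : ℕ, α * n1 = b * n2 + c * n3} α1)
    (hα2 : α2 ∈ lowerBounds {α : ℕ | 0 < α ∧ ∃ a c : ℕ, α * n2 = a * n1 + c * n3})
    (hα3 : α3 ∈ lowerBounds {α : ℕ | 0 < α ∧ ∃ a b : ℕ, α * n3 = a * n1 + b * n2})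
    (hα12 : α12 < α2) (hp21 : 0 < α21) (hr1 : α1 * n1 = α12 * n2 + α13 * n3)
    (hr2 : α2 * n2 = α21 * n1 + α23 * n3) {b c : ℕ} (hbc : AperyIndex α2 α3 α12 α13 b c) :
    len3 n1 n2 n3 (b * n2 + c * n3) = {b + c} := by
  ext s
  constructor
  · rintro ⟨a, B, C, h, rfl⟩
    obtain rfl := hbc.eq_zero_of_add_mul_eq h1 h3 hα1 hα2 hα3 hα12 hr1 h
    have hB : B < α2 := by
      by_contra! hB
      obtain ⟨d, rfl⟩ := Nat.exists_eq_add_of_le hB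
      have := hbc.eq_zero_of_add_mul_eq h1 h3 hα1 hα2 hα3 hα12 hr1
        (a := α21) (B := d) (C := C + α23) (by linarith)
      omega
    obtain ⟨rfl, rfl⟩ := eq_and_eq_of_mul_add_mul_eq h3 hα2 hB hbc.1 (by simpa using h)
    simp
  · rintro rfl
    exact ⟨0, b, c, by ring, by ring⟩

theorem notMem_ap3_of_succ_mul_add {a b c w : ℕ} (h : (a + 1) * n1 + b * n2 + c * n3 = w) :
    w ∉ ap3 n1 n2 n3 :=
  fun hw => hw.2 ⟨a * n1 + b * n2 + c * n3, ⟨a, b, c, rfl⟩, by rw [← h]; ring⟩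

theorem aperyIndex_of_mem_ap3 {α21 α23 α31 α32 : ℕ} (hp1 : 0 < α1) (hp21 : 0 < α21)
    (hp31 : 0 < α31) (hr1 : α1 * n1 = α12 * n2 + α13 * n3)
    (hr2 : α2 * n2 = α21 * n1 + α23 * n3) (hr3 : α3 * n3 = α31 * n1 + α32 * n2)
    {a b c w : ℕ} (hw : w ∈ ap3 n1 n2 n3) (h : a * n1 + b * n2 + c * n3 = w) :
    a = 0 ∧ AperyIndex α2 α3 α12 α13 b c := by
  obtain ⟨k1, rfl⟩ := Nat.exists_eq_add_one_of_ne_zero hp1.ne'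
  obtain ⟨k21, rfl⟩ := Nat.exists_eq_add_one_of_ne_zero hp21.ne'
  obtain ⟨k31, rfl⟩ := Nat.exists_eq_add_one_of_ne_zero hp31.ne'
  refine ⟨?_, ?_, ?_, ?_⟩
  · by_contra ha
    obtain ⟨a, rfl⟩ := Nat.exists_eq_add_one_of_ne_zero ha
    exact notMem_ap3_of_succ_mul_add h hw
  · by_contra! hb
    obtain ⟨d, rfl⟩ := Nat.exists_eq_add_of_le hb
    exact notMem_ap3_of_succ_mul_add (a := a + k21) (b := d) (c := c + α23) (by linarith) hw
  · by_contra! hc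
    obtain ⟨d, rfl⟩ := Nat.exists_eq_add_of_le hc
    exact notMem_ap3_of_succ_mul_add (a := a + k31) (b := b + α32) (c := d) (by linarith) hw
  · rintro ⟨hb, hc⟩
    obtain ⟨d, rfl⟩ := Nat.exists_eq_add_of_le hb
    obtain ⟨e, rfl⟩ := Nat.exists_eq_add_of_le hc
    exact notMem_ap3_of_succ_mul_add (a := a + k1) (b := d) (c := e) (by linarith) hw

theorem AperyIndex.add_le_max {b c : ℕ} (h : AperyIndex α2 α3 α12 α13 b c) :
    b + c ≤ max (α2 + α13 - 2) (α3 + α12 - 2) := by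
  obtain ⟨hb, hc, hbc⟩ := h
  omega

theorem stmt_17 (n1 n2 n3 : ℕ) (h1 : 0 < n1) (h23 : n2 < n3)
    (α1 α2 α3 α12 α13 α21 α23 α31 α32 : ℕ)
    (hα1 : IsLeast {α : ℕ | 0 < α ∧ ∃ b c : ℕ, α * n1 = b * n2 + c * n3} α1)
    (hα2 : IsLeast {α : ℕ | 0 < α ∧ ∃ a c : ℕ, α * n2 = a * n1 + c * n3} α2)
    (hα3 : IsLeast {α : ℕ | 0 < α ∧ ∃ a b : ℕ, α * n3 = a * n1 + b * n2} α3)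
    (hp12 : 0 < α12) (hp13 : 0 < α13) (hp21 : 0 < α21)
    (hp31 : 0 < α31) (hp32 : 0 < α32)
    (hr1 : α1 * n1 = α12 * n2 + α13 * n3)
    (hr2 : α2 * n2 = α21 * n1 + α23 * n3)
    (hr3 : α3 * n3 = α31 * n1 + α32 * n2)
    (hsum2 : α2 = α12 + α32) (hsum3 : α3 = α13 + α23) :
    IsGreatest {s | ∃ w ∈ ap3 n1 n2 n3, IsGreatest (len3 n1 n2 n3 w) s}
      (max (α2 + α13 - 2) (α3 + α12 - 2)) ∧
    (α2 - 1) * n2 + (α13 - 1) * n3 ∈ ap3 n1 n2 n3 ∧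
    (α12 - 1) * n2 + (α3 - 1) * n3 ∈ ap3 n1 n2 n3 := by
  have h3 : 0 < n3 := by omega
  have hα12 : α12 < α2 := by omega
  have hidx1 : AperyIndex α2 α3 α12 α13 (α2 - 1) (α13 - 1) := by
    refine ⟨?_, ?_, ?_⟩ <;> omega
  have hidx2 : AperyIndex α2 α3 α12 α13 (α12 - 1) (α3 - 1) := by
    refine ⟨?_, ?_, ?_⟩ <;> omega
  have mem1 := hidx1.mem_ap3 h1 h3 hα1 hα2.2 hα3.2 hα12 hr1
  have mem2 := hidx2.mem_ap3 h1 h3 hα1 hα2.2 hα3.2 hα12 hr1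
  have len1 := hidx1.len3_eq h1 h3 hα1 hα2.2 hα3.2 hα12 hp21 hr1 hr2
  have len2 := hidx2.len3_eq h1 h3 hα1 hα2.2 hα3.2 hα12 hp21 hr1 hr2
  refine ⟨⟨?_, ?_⟩, mem1, mem2⟩
  · rcases max_choice (α2 + α13 - 2) (α3 + α12 - 2) with hmax | hmax <;> rw [hmax]
    · refine ⟨_, mem1, ?_⟩
      rw [len1, show α2 + α13 - 2 = α2 - 1 + (α13 - 1) by omega]
      exact isGreatest_singleton
    · refine ⟨_, mem2, ?_⟩
      rw [len2, show α3 + α12 - 2 = α12 - 1 + (α3 - 1) by omega]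
      exact isGreatest_singleton
  · rintro s ⟨w, hw, hs⟩
    obtain ⟨a, b, c, h, rfl⟩ := hs.1
    obtain ⟨rfl, hidx⟩ := aperyIndex_of_mem_ap3 hα1.1.1 hp21 hp31 hr1 hr2 hr3 hw h
    simpa using hidx.add_le_max
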